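/- arXiv:1705.10596 — 3 statements merged into one kernel-verified Lean document; each statement's English description precedes it below -/
import Mathlib

section
/- Let H and K be complex Hilbert spaces, L : H → K a bounded linear operator, and suppose g = L f† where f† ∈ H is orthogonal to the kernel of L (i.e. f† ∈ (ker L)ᗮ). For λ > 0 let f_λ = (λ·id_H + L*L)⁻¹(L* g) be the Tikhonov minimizer. Then ‖f_λ − f†‖_H → 0 as λ → 0⁺. -/
/-!
For `e = f_λ - f†` the normal equation reads `λ e + L*L e = -λ f†`; pairing it with `e` gives
`λ‖e‖² + ‖L e‖² = -λ Re⟪e, f†⟫`. As `f† ⊥ ker L`, `f†` lies in the closure of the range of `L*`.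
Splitting `f† = L* w + r` and absorbing `λ‖L e‖‖w‖` into `‖L e‖²` yields
`‖e‖ ≤ ‖r‖ + √λ ‖w‖ / 2`: first make `‖r‖` small, then let `λ → 0`.
-/

open ContinuousLinearMap RCLike Filter Topology
open scoped InnerProductSpace

lemma le_add_of_sq_le_sq_add_mul {a b s : ℝ} (hb : 0 ≤ b) (hs : 0 ≤ s)
    (h : a ^ 2 ≤ s ^ 2 + b * a) : a ≤ b + s := by
  nlinarith

section Tikhonov

variable {𝕜 E F : Type*} [RCLike 𝕜]
  [NormedAddCommGroup E] [InnerProductSpace 𝕜 E] [CompleteSpace E]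
  [NormedAddCommGroup F] [InnerProductSpace 𝕜 F] [CompleteSpace F]

lemma re_inner_smul_add_adjoint_apply (T : E →L[𝕜] F) (lam : ℝ) (x : E) :
    re ⟪x, (lam : 𝕜) • x + adjoint T (T x)⟫_𝕜 = lam * ‖x‖ ^ 2 + ‖T x‖ ^ 2 := by
  rw [inner_add_right, inner_smul_right, adjoint_inner_right, map_add, re_ofReal_mul,
    inner_self_eq_norm_sq, inner_self_eq_norm_sq]

lemma tikhonov_error_energy_le (T : E →L[𝕜] F) {lam : ℝ} (hlam : 0 ≤ lam) {f f₀ : E}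
    (hf : (lam : 𝕜) • f + adjoint T (T f) = adjoint T (T f₀)) (w : F) :
    lam * ‖f - f₀‖ ^ 2 + ‖T (f - f₀)‖ ^ 2 ≤
      lam * (‖T (f - f₀)‖ * ‖w‖ + ‖f - f₀‖ * ‖f₀ - adjoint T w‖) := by
  set e := f - f₀
  have herr : (lam : 𝕜) • e + adjoint T (T e) = -((lam : 𝕜) • f₀) := by
    rw [smul_sub, map_sub, map_sub, sub_add_sub_comm, hf]
    abel
  have hsplit : ⟪e, f₀⟫_𝕜 = ⟪T e, w⟫_𝕜 + ⟪e, f₀ - adjoint T w⟫_𝕜 := by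
    rw [inner_sub_right, adjoint_inner_right, add_sub_cancel]
  have hw : -re ⟪T e, w⟫_𝕜 ≤ ‖T e‖ * ‖w‖ := by simpa using re_inner_le_norm (-T e) w
  have hr : -re ⟪e, f₀ - adjoint T w⟫_𝕜 ≤ ‖e‖ * ‖f₀ - adjoint T w‖ := by
    simpa using re_inner_le_norm (-e) (f₀ - adjoint T w)
  rw [← re_inner_smul_add_adjoint_apply, herr, inner_neg_right, inner_smul_right, hsplit,
    map_neg, re_ofReal_mul, map_add, ← mul_neg]
  exact mul_le_mul_of_nonneg_left (by linarith) hlam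

lemma norm_sub_le_of_tikhonov (T : E →L[𝕜] F) {lam : ℝ} (hlam : 0 < lam) {f f₀ : E}
    (hf : (lam : 𝕜) • f + adjoint T (T f) = adjoint T (T f₀)) (w : F) :
    ‖f - f₀‖ ≤ ‖f₀ - adjoint T w‖ + √lam * ‖w‖ / 2 := by
  have henergy := tikhonov_error_energy_le T hlam.le hf w
  refine le_add_of_sq_le_sq_add_mul (norm_nonneg _) (by positivity) ?_
  have : lam * ‖f - f₀‖ ^ 2 ≤ lam * ((√lam * ‖w‖ / 2) ^ 2 + ‖f₀ - adjoint T w‖ * ‖f - f₀‖) := by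
    rw [div_pow, mul_pow, Real.sq_sqrt hlam.le]
    nlinarith [sq_nonneg (‖T (f - f₀)‖ - lam * ‖w‖ / 2)]
  exact le_of_mul_le_mul_left this hlam

end Tikhonov

/-- If `g = L f†` with `f†` orthogonal to `ker L`, then the Tikhonov minimizers
`f_λ = (λ·id_H + L*L)⁻¹ (L* g)` (characterized by the regularized normal equation
`λ f_λ + L*L f_λ = L* g`) converge in norm to `f†` as `λ → 0⁺`. -/
theorem tikhonov_converges_to_solution
    {H K : Type*} [NormedAddCommGroup H] [InnerProductSpace ℂ H] [CompleteSpace H]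
    [NormedAddCommGroup K] [InnerProductSpace ℂ K] [CompleteSpace K]
    (L : H →L[ℂ] K) (fdag : H)
    (hperp : fdag ∈ (LinearMap.ker (L : H →ₗ[ℂ] K))ᗮ)
    (F : ℝ → H)
    (hF : ∀ lam : ℝ, 0 < lam →
      (lam : ℂ) • F lam + ContinuousLinearMap.adjoint L (L (F lam)) =
        ContinuousLinearMap.adjoint L (L fdag)) :
    Filter.Tendsto F (nhdsWithin 0 (Set.Ioi 0)) (nhds fdag) := by
  have hclosure : fdag ∈ (adjoint L).range.topologicalClosure := L.orthogonal_ker ▸ hperp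
  rw [Metric.tendsto_nhds]
  intro ε hε
  obtain ⟨_, ⟨w, rfl⟩, hw⟩ := Metric.mem_closure_iff.mp hclosure (ε / 2) (half_pos hε)
  have hsqrt : Tendsto (fun lam : ℝ => √lam * ‖w‖ / 2) (𝓝 0) (𝓝 0) := by
    simpa using ((Real.continuous_sqrt.tendsto 0).mul_const ‖w‖).div_const 2
  filter_upwards [nhdsWithin_le_nhds (hsqrt.eventually (gt_mem_nhds (half_pos hε))),
    self_mem_nhdsWithin] with lam hsmall hlam
  rw [dist_eq_norm] at hw ⊢
  calc ‖F lam - fdag‖ ≤ ‖fdag - adjoint L w‖ + √lam * ‖w‖ / 2 :=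
        norm_sub_le_of_tikhonov L hlam (hF lam hlam) w
    _ < ε / 2 + ε / 2 := add_lt_add hw hsmall
    _ = ε := add_halves ε
end

section
/- Let H and K be complex Hilbert spaces, L : H → K a bounded linear operator, g ∈ K, and suppose there exists f† ∈ H with f† ⊥ ker L and L*L f† = L* g (i.e. f† is the minimal-norm least-squares solution of L f = g). For λ > 0 let f_λ = (λ·id_H + L*L)⁻¹(L* g). Then ‖f_λ − f†‖_H → 0 as λ → 0⁺. -/
/-!
Write `e = f_λ - f†`. The normal equation turns the defining equation of `f_λ` into
`λ e + L*L e = -λ f†`, and pairing with `e` gives, for every `k`,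
`‖e‖² ≤ λ ‖k‖² / 2 + ‖f† - L* k‖²`. Since `f† ⊥ ker L`, it lies in the closure of the range
of `L*`, so the last term can be made arbitrarily small before letting `λ → 0`.
-/

open ContinuousLinearMap Filter Topology

section Tikhonov

variable {𝕜 E F : Type*} [RCLike 𝕜]
  [NormedAddCommGroup E] [InnerProductSpace 𝕜 E] [CompleteSpace E]
  [NormedAddCommGroup F] [InnerProductSpace 𝕜 F] [CompleteSpace F]

theorem norm_sq_le_of_tikhonov_eq (L : E →L[𝕜] F) {lam : ℝ} (hlam : 0 < lam) {e f : E}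
    (he : (lam : 𝕜) • e + adjoint L (L e) = -((lam : 𝕜) • f)) (k : F) :
    ‖e‖ ^ 2 ≤ lam * ‖k‖ ^ 2 / 2 + ‖f - adjoint L k‖ ^ 2 := by
  set r := f - adjoint L k
  have energy : lam * ‖e‖ ^ 2 + ‖L e‖ ^ 2
      = -(lam * (RCLike.re (inner 𝕜 (L e) k) + RCLike.re (inner 𝕜 e r))) := by
    have := congrArg (fun x => RCLike.re (inner 𝕜 e x)) he
    simp only [inner_add_right, inner_smul_right, inner_neg_right, adjoint_inner_right,
      map_add, map_neg, RCLike.re_ofReal_mul, inner_self_eq_norm_sq,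
      show f = adjoint L k + r by simp [r]] at this
    linarith
  have hk : -RCLike.re (inner 𝕜 (L e) k) ≤ ‖L e‖ * ‖k‖ := by
    simpa using re_inner_le_norm (𝕜 := 𝕜) (L e) (-k)
  have hr : -RCLike.re (inner 𝕜 e r) ≤ ‖e‖ * ‖r‖ := by
    simpa using re_inner_le_norm (𝕜 := 𝕜) e (-r)
  have amgm_k : lam * ‖L e‖ * ‖k‖ ≤ ‖L e‖ ^ 2 + lam ^ 2 * ‖k‖ ^ 2 / 4 := by
    nlinarith [sq_nonneg (‖L e‖ - lam * ‖k‖ / 2)]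
  have amgm_r : lam * ‖e‖ * ‖r‖ ≤ lam * (‖e‖ ^ 2 + ‖r‖ ^ 2) / 2 := by
    nlinarith [mul_nonneg hlam.le (sq_nonneg (‖e‖ - ‖r‖))]
  refine le_of_mul_le_mul_left ?_ hlam
  nlinarith [mul_le_mul_of_nonneg_left hk hlam.le, mul_le_mul_of_nonneg_left hr hlam.le]

theorem exists_norm_sub_adjoint_lt_of_mem_orthogonal_ker (L : E →L[𝕜] F) {f : E}
    (hf : f ∈ (LinearMap.ker (L : E →ₗ[𝕜] F))ᗮ) {ε : ℝ} (hε : 0 < ε) :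
    ∃ k : F, ‖f - adjoint L k‖ < ε := by
  rw [L.orthogonal_ker, ← SetLike.mem_coe, Submodule.topologicalClosure_coe] at hf
  obtain ⟨_, ⟨k, rfl⟩, hk⟩ := Metric.mem_closure_iff.mp hf ε hε
  exact ⟨k, by rwa [← dist_eq_norm]⟩

end Tikhonov

/-- If `f†` is the minimal-norm least-squares solution of `L f = g` (i.e. `f† ⊥ ker L`
and `L*L f† = L* g`), then the Tikhonov-regularized solutions
`f_λ = (λ·id_H + L*L)⁻¹ (L* g)` (characterized by `λ f_λ + L*L f_λ = L* g`)
converge in norm to `f†` as `λ → 0⁺`. -/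
theorem tikhonov_converges_to_least_squares_solution
    {H K : Type*} [NormedAddCommGroup H] [InnerProductSpace ℂ H] [CompleteSpace H]
    [NormedAddCommGroup K] [InnerProductSpace ℂ K] [CompleteSpace K]
    (L : H →L[ℂ] K) (g : K) (fdag : H)
    (hperp : fdag ∈ (LinearMap.ker (L : H →ₗ[ℂ] K))ᗮ)
    (hnormal : ContinuousLinearMap.adjoint L (L fdag) = ContinuousLinearMap.adjoint L g)
    (F : ℝ → H)
    (hF : ∀ lam : ℝ, 0 < lam →
      (lam : ℂ) • F lam + ContinuousLinearMap.adjoint L (L (F lam)) =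
        ContinuousLinearMap.adjoint L g) :
    Filter.Tendsto F (nhdsWithin 0 (Set.Ioi 0)) (nhds fdag) := by
  rw [Metric.tendsto_nhds]
  intro ε hε
  obtain ⟨k, hk⟩ := exists_norm_sub_adjoint_lt_of_mem_orthogonal_ker L hperp (half_pos hε)
  have hlam_small : ∀ᶠ lam in 𝓝[>] (0 : ℝ), lam * ‖k‖ ^ 2 / 2 < ε ^ 2 / 2 := by
    refine (Tendsto.mono_left ?_ nhdsWithin_le_nhds).eventually (gt_mem_nhds (by positivity))
    simpa using ((continuous_id.mul continuous_const).div_const 2).tendsto' (0 : ℝ) 0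
  filter_upwards [self_mem_nhdsWithin, hlam_small] with lam (hlam : 0 < lam) hsmall
  have herror :
      (lam : ℂ) • (F lam - fdag) + adjoint L (L (F lam - fdag)) = -((lam : ℂ) • fdag) := by
    rw [map_sub, map_sub]
    linear_combination (norm := module) hF lam hlam - hnormal
  have hbound := norm_sq_le_of_tikhonov_eq L hlam herror k
  rw [dist_eq_norm]
  nlinarith [norm_nonneg (F lam - fdag), norm_nonneg (fdag - adjoint L k)]
end

section
/- Let H be a real Hilbert space, v₁, …, v_N ∈ H, A₁, …, A_N ∈ ℝ, and λ₁, …, λ_N > 0. Suppose there exists f ∈ H with ⟨v_j, f⟩ = A_j for all j = 1, …, N, and let f* be the unique element of minimal norm satisfying these interpolation conditions. For each λ > 0 let f_λ be the unique minimizer of λ‖f‖²_H + Σ_{j=1}^N λ_j (⟨v_j, f⟩ − A_j)². Then ‖f_λ − f*‖_H → 0 as λ → 0⁺. -/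
/-!
Testing the regularized functional against `f*` gives `λ‖f_λ‖² + Σⱼ λⱼ rⱼ(f_λ)² ≤ λ‖f*‖²`, so
`‖f_λ‖ ≤ ‖f*‖` and every residual `rⱼ(f_λ) = ⟨vⱼ, f_λ⟩ − Aⱼ` is `O(√λ)`. Minimality of `f*` forces
`f* ∈ span {vⱼ}`, so `⟨f*, f_λ⟩ → ‖f*‖²`, and then
`‖f_λ − f*‖² ≤ 2 (‖f*‖² − ⟨f*, f_λ⟩) → 0`.
-/

open scoped InnerProductSpace
open Filter Topology

lemma tendsto_zero_of_sq_le {α : Type*} {l : Filter α} {r g : α → ℝ}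
    (hle : ∀ᶠ t in l, r t ^ 2 ≤ g t) (hg : Tendsto g l (𝓝 0)) : Tendsto r l (𝓝 0) :=
  squeeze_zero_norm' (hle.mono fun _ => Real.abs_le_sqrt) (by simpa using hg.sqrt)

section InnerProductSpace

variable {E : Type*} [NormedAddCommGroup E] [InnerProductSpace ℝ E]

lemma Submodule.mem_of_forall_norm_le_of_sub_mem_orthogonal (K : Submodule ℝ E)
    [K.HasOrthogonalProjection] {y : E} (hmin : ∀ x, x - y ∈ Kᗮ → ‖y‖ ≤ ‖x‖) : y ∈ K := by
  refine (K.mem_iff_norm_starProjection y).2 (le_antisymm (K.norm_starProjection_apply_le y) ?_)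
  refine hmin _ ?_
  simpa using Kᗮ.neg_mem (K.sub_starProjection_mem_orthogonal y)

lemma tendsto_inner_of_mem_span {ι α : Type*} {l : Filter α} {v : ι → E} {x : α → E} {y u : E}
    (hv : ∀ j, Tendsto (fun t => ⟪v j, x t⟫_ℝ) l (𝓝 ⟪v j, y⟫_ℝ))
    (hu : u ∈ Submodule.span ℝ (Set.range v)) :
    Tendsto (fun t => ⟪u, x t⟫_ℝ) l (𝓝 ⟪u, y⟫_ℝ) := by
  induction hu using Submodule.span_induction with
  | mem _ h => obtain ⟨j, rfl⟩ := h; exact hv j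
  | zero => simpa using tendsto_const_nhds
  | add _ _ _ _ h₁ h₂ => simpa only [inner_add_left] using h₁.add h₂
  | smul a _ _ h => simpa only [real_inner_smul_left] using h.const_mul a

lemma norm_sub_sq_le_of_norm_le {x y : E} (h : ‖x‖ ≤ ‖y‖) :
    ‖x - y‖ ^ 2 ≤ 2 * (⟪y, y⟫_ℝ - ⟪y, x⟫_ℝ) := by
  rw [norm_sub_sq_real, real_inner_comm, real_inner_self_eq_norm_sq]
  nlinarith [norm_nonneg x]

lemma tendsto_of_norm_le_of_tendsto_inner {α : Type*} {l : Filter α} {x : α → E} {y : E}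
    (hnorm : ∀ᶠ t in l, ‖x t‖ ≤ ‖y‖) (hinner : Tendsto (fun t => ⟪y, x t⟫_ℝ) l (𝓝 ⟪y, y⟫_ℝ)) :
    Tendsto x l (𝓝 y) := by
  rw [tendsto_iff_norm_sub_tendsto_zero]
  refine tendsto_zero_of_sq_le (hnorm.mono fun t => norm_sub_sq_le_of_norm_le) ?_
  simpa using (hinner.const_sub ⟪y, y⟫_ℝ).const_mul 2

end InnerProductSpace

section Tikhonov

variable {ι H : Type*} [Fintype ι] [NormedAddCommGroup H] [InnerProductSpace ℝ H]

def tikhonovFunctional (v : ι → H) (A w : ι → ℝ) (lam : ℝ) (f : H) : ℝ :=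
  lam * ‖f‖ ^ 2 + ∑ j, w j * (⟪v j, f⟫_ℝ - A j) ^ 2

variable {v : ι → H} {A w : ι → ℝ} {lam : ℝ} {f g : H}

lemma tikhonovFunctional_of_interp (hf : ∀ j, ⟪v j, f⟫_ℝ = A j) :
    tikhonovFunctional v A w lam f = lam * ‖f‖ ^ 2 := by
  simp [tikhonovFunctional, hf]

lemma mul_norm_sq_le_tikhonovFunctional (hw : ∀ j, 0 ≤ w j) (lam : ℝ) (g : H) :
    lam * ‖g‖ ^ 2 ≤ tikhonovFunctional v A w lam g :=
  le_add_of_nonneg_right <| Finset.sum_nonneg fun j _ => mul_nonneg (hw j) (sq_nonneg _)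

lemma weighted_residual_le_tikhonovFunctional (hw : ∀ j, 0 ≤ w j) (hlam : 0 ≤ lam) (g : H)
    (j : ι) : w j * (⟪v j, g⟫_ℝ - A j) ^ 2 ≤ tikhonovFunctional v A w lam g :=
  le_add_of_nonneg_of_le (by positivity) <|
    Finset.single_le_sum (f := fun i => w i * (⟪v i, g⟫_ℝ - A i) ^ 2)
      (fun i _ => mul_nonneg (hw i) (sq_nonneg _)) (Finset.mem_univ j)

lemma norm_le_of_tikhonovFunctional_le (hw : ∀ j, 0 ≤ w j) (hlam : 0 < lam)
    (hf : ∀ j, ⟪v j, f⟫_ℝ = A j)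
    (hg : tikhonovFunctional v A w lam g ≤ tikhonovFunctional v A w lam f) : ‖g‖ ≤ ‖f‖ := by
  have := (mul_norm_sq_le_tikhonovFunctional hw lam g).trans hg
  rw [tikhonovFunctional_of_interp hf, mul_le_mul_iff_right₀ hlam] at this
  exact pow_le_pow_iff_left₀ (norm_nonneg g) (norm_nonneg f) two_ne_zero |>.1 this

lemma residual_sq_le_of_tikhonovFunctional_le (hw : ∀ j, 0 < w j) (hlam : 0 ≤ lam)
    (hf : ∀ j, ⟪v j, f⟫_ℝ = A j)
    (hg : tikhonovFunctional v A w lam g ≤ tikhonovFunctional v A w lam f) (j : ι) :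
    (⟪v j, g⟫_ℝ - A j) ^ 2 ≤ lam * ‖f‖ ^ 2 / w j := by
  have := (weighted_residual_le_tikhonovFunctional (fun i => (hw i).le) hlam g j).trans hg
  rwa [tikhonovFunctional_of_interp hf, ← le_div_iff₀' (hw j)] at this

lemma tendsto_inner_of_tikhonovFunctional_le (hw : ∀ j, 0 < w j) (hf : ∀ j, ⟪v j, f⟫_ℝ = A j)
    {F : ℝ → H}
    (hF : ∀ lam, 0 < lam → tikhonovFunctional v A w lam (F lam) ≤ tikhonovFunctional v A w lam f)
    (j : ι) : Tendsto (fun lam => ⟪v j, F lam⟫_ℝ) (𝓝[>] 0) (𝓝 (A j)) := by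
  rw [← tendsto_sub_nhds_zero_iff]
  refine tendsto_zero_of_sq_le (eventually_nhdsWithin_of_forall fun lam hlam =>
    residual_sq_le_of_tikhonovFunctional_le hw hlam.le hf (hF lam hlam) j) ?_
  have : Tendsto (fun lam : ℝ => lam) (𝓝[>] 0) (𝓝 0) := nhdsWithin_le_nhds
  simpa using (this.mul_const (‖f‖ ^ 2)).div_const (w j)

end Tikhonov

theorem discrete_tikhonov_converges_to_minimal_norm_interpolant_general
    {H : Type*} [NormedAddCommGroup H] [InnerProductSpace ℝ H]
    (N : ℕ) (v : Fin N → H) (A : Fin N → ℝ)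
    (lamw : Fin N → ℝ) (hlamw : ∀ j, 0 < lamw j)
    (fstar : H)
    (hfs_interp : ∀ j, ⟪v j, fstar⟫_ℝ = A j)
    (hfs_min : ∀ f : H, (∀ j, ⟪v j, f⟫_ℝ = A j) → ‖fstar‖ ≤ ‖f‖)
    (F : ℝ → H)
    (hF : ∀ lam : ℝ, 0 < lam → ∀ f : H,
      lam * ‖F lam‖ ^ 2 + ∑ j, lamw j * (⟪v j, F lam⟫_ℝ - A j) ^ 2 ≤
        lam * ‖f‖ ^ 2 + ∑ j, lamw j * (⟪v j, f⟫_ℝ - A j) ^ 2) :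
    Filter.Tendsto F (nhdsWithin 0 (Set.Ioi 0)) (nhds fstar) := by
  set V := Submodule.span ℝ (Set.range v)
  have : FiniteDimensional ℝ V := FiniteDimensional.span_of_finite ℝ (Set.finite_range v)
  have hspan : fstar ∈ V := V.mem_of_forall_norm_le_of_sub_mem_orthogonal fun x hx =>
    hfs_min x fun j => by
      have := V.inner_right_of_mem_orthogonal (Submodule.subset_span ⟨j, rfl⟩) hx
      rwa [inner_sub_right, sub_eq_zero, hfs_interp] at this
  have hFstar : ∀ lam, 0 < lam →
      tikhonovFunctional v A lamw lam (F lam) ≤ tikhonovFunctional v A lamw lam fstar :=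
    fun lam hlam => hF lam hlam fstar
  refine tendsto_of_norm_le_of_tendsto_inner (eventually_nhdsWithin_of_forall fun lam hlam =>
    norm_le_of_tikhonovFunctional_le (fun j => (hlamw j).le) hlam hfs_interp (hFstar lam hlam))
    (tendsto_inner_of_mem_span (fun j => ?_) hspan)
  rw [hfs_interp]
  exact tendsto_inner_of_tikhonovFunctional_le hlamw hfs_interp hFstar j

/-- If the interpolation conditions `⟨vⱼ, f⟩ = Aⱼ` are solvable and `f*` is the
minimal-norm interpolant, then the minimizers `f_λ` of the discrete regularized
functional `λ‖f‖² + Σⱼ λⱼ(⟨vⱼ, f⟩ − Aⱼ)²` converge in norm to `f*` as `λ → 0⁺`. -/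
theorem discrete_tikhonov_converges_to_minimal_norm_interpolant
    {H : Type*} [NormedAddCommGroup H] [InnerProductSpace ℝ H] [CompleteSpace H]
    (N : ℕ) (v : Fin N → H) (A : Fin N → ℝ)
    (lamw : Fin N → ℝ) (hlamw : ∀ j, 0 < lamw j)
    (fstar : H)
    (hfs_interp : ∀ j, ⟪v j, fstar⟫_ℝ = A j)
    (hfs_min : ∀ f : H, (∀ j, ⟪v j, f⟫_ℝ = A j) → ‖fstar‖ ≤ ‖f‖)
    (F : ℝ → H)
    (hF : ∀ lam : ℝ, 0 < lam → ∀ f : H,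
      lam * ‖F lam‖ ^ 2 + ∑ j, lamw j * (⟪v j, F lam⟫_ℝ - A j) ^ 2 ≤
        lam * ‖f‖ ^ 2 + ∑ j, lamw j * (⟪v j, f⟫_ℝ - A j) ^ 2) :
    Filter.Tendsto F (nhdsWithin 0 (Set.Ioi 0)) (nhds fstar) :=
  discrete_tikhonov_converges_to_minimal_norm_interpolant_general N v A lamw hlamw fstar hfs_interp
    hfs_min F hF
end
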